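/- Let n = 2, ν₁, ν₂ > 0, K a strictly concave strictly monotone kernel function, J an upper semicontinuous 2-field function, and let x = (x₁,x₂), y = (y₁,y₂) be regular node systems with x₁ < y₁ < y₂ < x₂. Then m₁(y) < m₁(x), and moreover either m₀(x) < m₀(y) or m₂(x) < m₂(y). In particular intertwining of maxima holds for x and y. -/

import Mathlib

open Set

noncomputable section

/-- A kernel function: `[-1,1] → ℝ ∪ {-∞}`, real-valued and concave on `(-1,0)` and on `(0,1)`,
extended continuously (in `EReal`) to the closed subintervals, so that the endpoint values
(in particular `K 0`) are the one-sided limits. -/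
def KernelFun (K : ℝ → EReal) : Prop :=
  (∀ t, K t ≠ ⊤) ∧
  (∀ t ∈ Ioo (-1:ℝ) 0 ∪ Ioo (0:ℝ) 1, K t ≠ ⊥) ∧
  ConcaveOn ℝ (Ioo (-1:ℝ) 0) (fun t => (K t).toReal) ∧
  ConcaveOn ℝ (Ioo (0:ℝ) 1) (fun t => (K t).toReal) ∧
  ContinuousOn K (Icc (-1:ℝ) 0) ∧
  ContinuousOn K (Icc (0:ℝ) 1)

/-- Monotonicity condition (M): nonincreasing on `(-1,0)`, nondecreasing on `(0,1)`. -/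
def KMonotone (K : ℝ → EReal) : Prop :=
  AntitoneOn K (Ioo (-1:ℝ) 0) ∧ MonotoneOn K (Ioo (0:ℝ) 1)

/-- Strict monotonicity (SM): strictly decreasing on `[-1,0)`, strictly increasing on `(0,1]`. -/
def KStrictMonotone (K : ℝ → EReal) : Prop :=
  StrictAntiOn K (Ico (-1:ℝ) 0) ∧ StrictMonoOn K (Ioc (0:ℝ) 1)

/-- Strict concavity on both `(-1,0)` and `(0,1)`. -/
def KStrictConcave (K : ℝ → EReal) : Prop :=
  StrictConcaveOn ℝ (Ioo (-1:ℝ) 0) (fun t => (K t).toReal) ∧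
  StrictConcaveOn ℝ (Ioo (0:ℝ) 1) (fun t => (K t).toReal)

/-- An `n`-field function: bounded above on `[0,1]`, never `+∞`, and finite at more than `n`
points of `[0,1]`, counting the endpoints `0`, `1` with weight `1/2` only. -/
def NFieldFun (n : ℕ) (J : ℝ → EReal) : Prop :=
  (∀ t, J t ≠ ⊤) ∧
  (∃ M : ℝ, ∀ t ∈ Icc (0:ℝ) 1, J t ≤ (M : EReal)) ∧
  ((∃ S : Finset ℝ, ↑S ⊆ {t ∈ Ioo (0:ℝ) 1 | J t ≠ ⊥} ∧ n + 1 ≤ S.card) ∨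
   ((∃ S : Finset ℝ, ↑S ⊆ {t ∈ Ioo (0:ℝ) 1 | J t ≠ ⊥} ∧ n ≤ S.card) ∧
     (J 0 ≠ ⊥ ∨ J 1 ≠ ⊥)))

/-- The closed simplex: `0 ≤ x₁ ≤ ⋯ ≤ xₙ ≤ 1`. -/
def closedSimplex (n : ℕ) (x : Fin n → ℝ) : Prop :=
  (∀ i, x i ∈ Icc (0:ℝ) 1) ∧ Monotone x

/-- The open simplex: `0 < x₁ < ⋯ < xₙ < 1`. -/
def openSimplex (n : ℕ) (x : Fin n → ℝ) : Prop :=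
  (∀ i, x i ∈ Ioo (0:ℝ) 1) ∧ StrictMono x

/-- Extended node system: `x₀ = 0`, `x₁,…,xₙ`, `x_{n+1} = 1`. -/
def extNodes (n : ℕ) (x : Fin n → ℝ) : Fin (n + 2) → ℝ :=
  Fin.cons 0 (Fin.snoc x 1)

/-- The (weighted) sum of translates function `F(x,t) = J(t) + ∑ νⱼ K(t - xⱼ)`. -/
def sumTrans (n : ℕ) (ν : Fin n → ℝ) (K J : ℝ → EReal) (x : Fin n → ℝ) (t : ℝ) : EReal :=
  J t + ∑ i, (ν i : EReal) * K (t - x i)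

/-- The `j`-th interval maximum `mⱼ(x) = sup_{[xⱼ, xⱼ₊₁]} F(x,·)`. -/
def intMax (n : ℕ) (ν : Fin n → ℝ) (K J : ℝ → EReal) (x : Fin n → ℝ) (j : Fin (n + 1)) :
    EReal :=
  sSup (sumTrans n ν K J x '' Icc (extNodes n x j.castSucc) (extNodes n x j.succ))

/-- A node system is regular (nonsingular) if all interval maxima are finite. -/
def regularNodes (n : ℕ) (ν : Fin n → ℝ) (K J : ℝ → EReal) (x : Fin n → ℝ) : Prop :=
  ∀ j, intMax n ν K J x j ≠ ⊥


open Filter Topology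

/-! Let `t` maximize `F(y,·)` on `[y₁, y₂]`, which is possible by upper semicontinuity. Moving
the nodes outward to `x₁, x₂` strictly increases `K(t - y₁)` and does not decrease `K(t - y₂)`,
so `m₁(y) = F(y,t) < F(x,t) ≤ m₁(x)`.

If neither `m₀` nor `m₂` increased, then at maximizers `a ∈ [0, x₁]` and `b ∈ [x₂, 1]` of
`F(x,·)` we would have `F(y,a) ≤ F(x,a)` and `F(y,b) ≤ F(x,b)`. At `a` all arguments of `K` lie
in `[-1, 0]` and at `b` in `[0, 1]`; on each side strict concavity compares the secant slopes of
`K` over the two displacements `[x₁, y₁]` and `[y₂, x₂]`, and monotonicity fixes their signs.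
The point `a` then forces `ν₁ (y₁ - x₁) < ν₂ (x₂ - y₂)` and the point `b` the reverse
inequality. -/


theorem ConcaveOn.closure_of_continuousOn {E : Type*} [AddCommGroup E] [Module ℝ E]
    [TopologicalSpace E] [IsTopologicalAddGroup E] [ContinuousSMul ℝ E] {s : Set E} {g : E → ℝ}
    (hg : ConcaveOn ℝ s g) (hc : ContinuousOn g (closure s)) :
    ConcaveOn ℝ (closure s) g := by
  refine ⟨hg.1.closure, fun x hx y hy a b ha hb hab => ?_⟩
  refine le_on_closure (fun y' hy' => le_on_closure (fun x' hx' => hg.2 hx' hy' ha hb hab)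
    (by fun_prop) (hc.comp (by fun_prop) fun x' hx' => ?_) hx) (by fun_prop)
    (hc.comp (by fun_prop) fun y' hy' => hg.1.closure hx hy' ha hb hab) hy
  exact hg.1.closure hx' (subset_closure hy') ha hb hab

theorem StrictConcaveOn.slope_lt_of_continuousOn {g : ℝ → ℝ} {p q r w : ℝ}
    (hg : StrictConcaveOn ℝ (Ioo p w) g) (hc : ContinuousOn g (Icc p w))
    (hpq : p < q) (hqr : q < r) (hrw : r < w) :
    (g w - g r) / (w - r) < (g q - g p) / (q - p) := by
  have hpw : p < w := by linarith
  have hconc : ConcaveOn ℝ (Icc p w) g := by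
    simpa only [closure_Ioo hpw.ne] using
      hg.concaveOn.closure_of_continuousOn (by rwa [closure_Ioo hpw.ne])
  obtain ⟨m, hqm, hmr⟩ := exists_between hqr
  calc (g w - g r) / (w - r) ≤ (g r - g m) / (r - m) :=
        hconc.slope_anti_adjacent ⟨by linarith, by linarith⟩ ⟨by linarith, le_rfl⟩ hmr hrw
    _ < (g m - g q) / (m - q) :=
        hg.slope_anti_adjacent ⟨hpq, by linarith⟩ ⟨by linarith, hrw⟩ hqm hmr
    _ ≤ (g q - g p) / (q - p) :=
        hconc.slope_anti_adjacent ⟨le_rfl, by linarith⟩ ⟨by linarith, by linarith⟩ hpq hqm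

theorem StrictMonoOn.Icc_of_Ioc {β : Type*} [LinearOrder β] [TopologicalSpace β]
    [OrderClosedTopology β] {f : ℝ → β} {a b : ℝ} (hf : StrictMonoOn f (Ioc a b))
    (ha : ContinuousWithinAt f (Icc a b) a) : StrictMonoOn f (Icc a b) := by
  intro x hx y hy hxy
  rcases hx.1.eq_or_lt with rfl | hax
  · obtain ⟨m, ham, hmy⟩ := exists_between hxy
    have hm : m ∈ Ioc a b := ⟨ham, hmy.le.trans hy.2⟩
    have hsub : Ioo a m ⊆ Ioc a b := fun u hu => ⟨hu.1, hu.2.le.trans hm.2⟩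
    have : (𝓝[Ioo a m] a).NeBot := left_nhdsWithin_Ioo_neBot ham
    have hle : f a ≤ f m :=
      le_of_tendsto (ha.mono (hsub.trans Ioc_subset_Icc_self))
        (eventually_nhdsWithin_of_forall fun u hu => (hf (hsub hu) hm hu.2).le)
    exact hle.trans_lt (hf hm ⟨hxy, hy.2⟩ hmy)
  · exact hf ⟨hax, hx.2⟩ ⟨hax.trans hxy, hy.2⟩ hxy

theorem StrictAntiOn.Icc_of_Ico {β : Type*} [LinearOrder β] [TopologicalSpace β]
    [OrderClosedTopology β] {f : ℝ → β} {a b : ℝ} (hf : StrictAntiOn f (Ico a b))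
    (hb : ContinuousWithinAt f (Icc a b) b) : StrictAntiOn f (Icc a b) := by
  intro x hx y hy hxy
  rcases hy.2.eq_or_lt with rfl | hyb
  · obtain ⟨m, hxm, hmy⟩ := exists_between hxy
    have hm : m ∈ Ico a y := ⟨hx.1.trans hxm.le, hmy⟩
    have hsub : Ioo m y ⊆ Ico a y := fun u hu => ⟨hm.1.trans hu.1.le, hu.2⟩
    have : (𝓝[Ioo m y] y).NeBot := right_nhdsWithin_Ioo_neBot hmy
    have hle : f y ≤ f m :=
      le_of_tendsto (hb.mono (hsub.trans Ico_subset_Icc_self))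
        (eventually_nhdsWithin_of_forall fun u hu => (hf hm (hsub hu) hu.1).le)
    exact hle.trans_lt (hf ⟨hx.1, hxy⟩ hm hxm)
  · exact hf ⟨hx.1, hxy.trans hyb⟩ ⟨hy.1, hyb⟩ hxy

theorem EReal.continuous_coe_mul {ν : ℝ} (hν : 0 < ν) :
    Continuous fun z : EReal => (ν : EReal) * z :=
  continuous_iff_continuousAt.2 fun z =>
    (EReal.continuousAt_mul (p := ((ν : EReal), z)) (Or.inl (by simp [hν.ne']))
      (Or.inl (by simp [hν.ne'])) (Or.inl (by simp)) (Or.inl (by simp))).comp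
      (continuous_const.prodMk continuous_id).continuousAt

theorem EReal.toReal_lt_toReal {x y : EReal} (h : x < y) (hx : x ≠ ⊥) (hy : y ≠ ⊤) :
    x.toReal < y.toReal := by
  lift x to ℝ using ⟨h.ne_top, hx⟩
  lift y to ℝ using ⟨hy, h.ne_bot⟩
  exact_mod_cast h

theorem UpperSemicontinuousOn.exists_sSup_image_eq {α β : Type*} [TopologicalSpace α]
    [CompleteLinearOrder β] {f : α → β} {s : Set α} (hf : UpperSemicontinuousOn f s)
    (hs : IsCompact s) (hne : s.Nonempty) : ∃ t ∈ s, sSup (f '' s) = f t := by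
  obtain ⟨t, ht, hmax⟩ := hf.exists_isMaxOn hne hs
  exact ⟨t, ht, sSup_image'.trans (hmax.iSup_eq ht)⟩

namespace KernelFun

variable {K : ℝ → EReal}

theorem continuousOn_Icc (hK : KernelFun K) : ContinuousOn K (Icc (-1) 1) := by
  rw [← Icc_union_Icc_eq_Icc (by norm_num : (-1 : ℝ) ≤ 0) zero_le_one]
  exact hK.2.2.2.2.1.union_of_isClosed hK.2.2.2.2.2 isClosed_Icc isClosed_Icc

theorem strictAntiOn_Icc (hK : KernelFun K) (hSM : KStrictMonotone K) :
    StrictAntiOn K (Icc (-1) 0) :=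
  hSM.1.Icc_of_Ico (hK.2.2.2.2.1 0 ⟨by norm_num, le_rfl⟩)

theorem strictMonoOn_Icc (hK : KernelFun K) (hSM : KStrictMonotone K) :
    StrictMonoOn K (Icc 0 1) :=
  hSM.2.Icc_of_Ioc (hK.2.2.2.2.2 0 ⟨le_rfl, zero_le_one⟩)

theorem toReal_sub_mul_lt (hK : KernelFun K) (hSC : KStrictConcave K) {p q r w : ℝ}
    (hI : -1 ≤ p ∧ w ≤ 0 ∨ 0 ≤ p ∧ w ≤ 1) (hp : K p ≠ ⊥) (hw : K w ≠ ⊥)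
    (hpq : p < q) (hqr : q < r) (hrw : r < w) :
    ((K w).toReal - (K r).toReal) * (q - p) < ((K q).toReal - (K p).toReal) * (w - r) := by
  have hfin : ∀ t ∈ Icc p w, K t ≠ ⊥ := by
    rintro t ⟨hpt, htw⟩
    rcases hpt.eq_or_lt with rfl | hpt
    · exact hp
    rcases htw.eq_or_lt with rfl | htw
    · exact hw
    refine hK.2.1 t ?_
    rcases hI with hI | hI
    exacts [Or.inl ⟨by linarith, by linarith⟩, Or.inr ⟨by linarith, by linarith⟩]
  have hconc : StrictConcaveOn ℝ (Ioo p w) fun t => (K t).toReal := by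
    rcases hI with hI | hI
    exacts [hSC.1.subset (Ioo_subset_Ioo hI.1 hI.2) (convex_Ioo p w),
      hSC.2.subset (Ioo_subset_Ioo hI.1 hI.2) (convex_Ioo p w)]
  have hcont : ContinuousOn K (Icc p w) :=
    hK.continuousOn_Icc.mono (Icc_subset_Icc (by rcases hI with hI | hI <;> linarith)
      (by rcases hI with hI | hI <;> linarith))
  have hslope := hconc.slope_lt_of_continuousOn
    (EReal.continuousOn_toReal.comp hcont fun t ht => by simp [hK.1 t, hfin t ht]) hpq hqr hrw
  rwa [div_lt_div_iff₀ (by linarith) (by linarith)] at hslope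

end KernelFun

section TwoNodes

variable {ν₁ ν₂ : ℝ} {K J : ℝ → EReal}

theorem sumTrans_two (c₁ c₂ t : ℝ) :
    sumTrans 2 ![ν₁, ν₂] K J ![c₁, c₂] t = J t + (ν₁ * K (t - c₁) + ν₂ * K (t - c₂)) := by
  simp [sumTrans, Fin.sum_univ_two]

theorem intMax_two_zero (c₁ c₂ : ℝ) :
    intMax 2 ![ν₁, ν₂] K J ![c₁, c₂] 0 = sSup (sumTrans 2 ![ν₁, ν₂] K J ![c₁, c₂] '' Icc 0 c₁) :=
  rfl

theorem intMax_two_one (c₁ c₂ : ℝ) :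
    intMax 2 ![ν₁, ν₂] K J ![c₁, c₂] 1 = sSup (sumTrans 2 ![ν₁, ν₂] K J ![c₁, c₂] '' Icc c₁ c₂) :=
  rfl

theorem intMax_two_two (c₁ c₂ : ℝ) :
    intMax 2 ![ν₁, ν₂] K J ![c₁, c₂] 2 = sSup (sumTrans 2 ![ν₁, ν₂] K J ![c₁, c₂] '' Icc c₂ 1) :=
  rfl

theorem sumTrans_two_ne_bot (hν₁ : 0 < ν₁) (hν₂ : 0 < ν₂) {c₁ c₂ t : ℝ}
    (h : sumTrans 2 ![ν₁, ν₂] K J ![c₁, c₂] t ≠ ⊥) :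
    J t ≠ ⊥ ∧ K (t - c₁) ≠ ⊥ ∧ K (t - c₂) ≠ ⊥ := by
  rw [sumTrans_two] at h
  refine ⟨?_, ?_, ?_⟩ <;> intro hbot <;> apply h
  · rw [hbot, EReal.bot_add]
  · rw [hbot, EReal.coe_mul_bot_of_pos hν₁, EReal.bot_add, EReal.add_bot]
  · rw [hbot, EReal.coe_mul_bot_of_pos hν₂, EReal.add_bot, EReal.add_bot]

theorem sumTrans_two_eq_coe (hJ : ∀ t, J t ≠ ⊤) (hK : ∀ s, K s ≠ ⊤) {c₁ c₂ t : ℝ}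
    (hJt : J t ≠ ⊥) (h₁ : K (t - c₁) ≠ ⊥) (h₂ : K (t - c₂) ≠ ⊥) :
    sumTrans 2 ![ν₁, ν₂] K J ![c₁, c₂] t =
      ((J t).toReal + (ν₁ * (K (t - c₁)).toReal + ν₂ * (K (t - c₂)).toReal) : ℝ) := by
  rw [sumTrans_two, ← EReal.coe_toReal (hJ t) hJt, ← EReal.coe_toReal (hK _) h₁,
    ← EReal.coe_toReal (hK _) h₂]
  norm_cast

theorem upperSemicontinuousOn_sumTrans_two (hν₁ : 0 < ν₁) (hν₂ : 0 < ν₂) (hK : KernelFun K)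
    (hJ : ∀ t, J t ≠ ⊤) (hJusc : UpperSemicontinuousOn J (Icc 0 1)) {c₁ c₂ : ℝ}
    (hc₁ : c₁ ∈ Icc (0 : ℝ) 1) (hc₂ : c₂ ∈ Icc (0 : ℝ) 1) :
    UpperSemicontinuousOn (sumTrans 2 ![ν₁, ν₂] K J ![c₁, c₂]) (Icc 0 1) := by
  have hterm : ∀ {ν c : ℝ}, 0 < ν → c ∈ Icc (0 : ℝ) 1 →
      ContinuousOn (fun t => (ν : EReal) * K (t - c)) (Icc 0 1) := fun hν hc =>
    (EReal.continuous_coe_mul hν).comp_continuousOn (hK.continuousOn_Icc.comp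
      (continuousOn_id.sub continuousOn_const)
      fun t ht => ⟨by linarith [ht.1, hc.2], by linarith [ht.2, hc.1]⟩)
  have hterm_ne_top : ∀ {ν : ℝ}, 0 < ν → ∀ s, (ν : EReal) * K s ≠ ⊤ := fun {ν} hν s =>
    (EReal.mul_ne_top _ _).2 ⟨Or.inl (EReal.coe_ne_bot ν), Or.inl (by exact_mod_cast hν.le),
      Or.inl (EReal.coe_ne_top ν), Or.inr (hK.1 s)⟩
  have hpot : ContinuousOn (fun t => (ν₁ : EReal) * K (t - c₁) + ν₂ * K (t - c₂)) (Icc 0 1) :=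
    fun t ht => (EReal.continuousAt_add (Or.inl (hterm_ne_top hν₁ _))
      (Or.inr (hterm_ne_top hν₂ _))).comp_continuousWithinAt
        ((hterm hν₁ hc₁ t ht).prodMk (hterm hν₂ hc₂ t ht))
  rw [show sumTrans 2 ![ν₁, ν₂] K J ![c₁, c₂] = _ from funext (sumTrans_two c₁ c₂)]
  exact hJusc.add' hpot.upperSemicontinuousOn fun t _ => EReal.continuousAt_add
    (Or.inl (hJ t)) (Or.inr (EReal.add_lt_top (hterm_ne_top hν₁ _) (hterm_ne_top hν₂ _)).ne)


theorem intMax_one_lt_of_nested (hν₁ : 0 < ν₁) (hν₂ : 0 < ν₂) (hK : KernelFun K)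
    (hSM : KStrictMonotone K) (hJ : ∀ t, J t ≠ ⊤) (hJusc : UpperSemicontinuousOn J (Icc 0 1))
    {x₁ x₂ y₁ y₂ : ℝ} (h0 : 0 ≤ x₁) (h1 : x₁ < y₁) (h2 : y₁ < y₂) (h3 : y₂ < x₂) (h4 : x₂ ≤ 1)
    (hy : intMax 2 ![ν₁, ν₂] K J ![y₁, y₂] 1 ≠ ⊥) :
    intMax 2 ![ν₁, ν₂] K J ![y₁, y₂] 1 < intMax 2 ![ν₁, ν₂] K J ![x₁, x₂] 1 := by
  obtain ⟨t, ⟨ht₁, ht₂⟩, hmax⟩ := ((upperSemicontinuousOn_sumTrans_two hν₁ hν₂ hK hJ hJusc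
    (c₁ := y₁) (c₂ := y₂) ⟨by linarith, by linarith⟩ ⟨by linarith, by linarith⟩).mono
    (Icc_subset_Icc (by linarith) (by linarith))).exists_sSup_image_eq isCompact_Icc
    (nonempty_Icc.2 h2.le)
  rw [intMax_two_one, hmax] at hy ⊢
  obtain ⟨hJt, hKy₁, hKy₂⟩ := sumTrans_two_ne_bot hν₁ hν₂ hy
  have hKx₁ : K (t - x₁) ≠ ⊥ := hK.2.1 _ (Or.inr ⟨by linarith, by linarith⟩)
  have hKx₂ : K (t - x₂) ≠ ⊥ := hK.2.1 _ (Or.inl ⟨by linarith, by linarith⟩)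
  have hlt₁ : (K (t - y₁)).toReal < (K (t - x₁)).toReal := EReal.toReal_lt_toReal
    (hK.strictMonoOn_Icc hSM ⟨by linarith, by linarith⟩ ⟨by linarith, by linarith⟩
      (by linarith)) hKy₁ (hK.1 _)
  have hle₂ : (K (t - y₂)).toReal ≤ (K (t - x₂)).toReal := EReal.toReal_le_toReal
    (hK.strictAntiOn_Icc hSM ⟨by linarith, by linarith⟩ ⟨by linarith, by linarith⟩
      (by linarith)).le hKy₂ (hK.1 _)
  calc sumTrans 2 ![ν₁, ν₂] K J ![y₁, y₂] t < sumTrans 2 ![ν₁, ν₂] K J ![x₁, x₂] t := by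
        rw [sumTrans_two_eq_coe hJ hK.1 hJt hKy₁ hKy₂, sumTrans_two_eq_coe hJ hK.1 hJt hKx₁ hKx₂,
          EReal.coe_lt_coe_iff]
        linarith [mul_lt_mul_of_pos_left hlt₁ hν₁, mul_le_mul_of_nonneg_left hle₂ hν₂.le]
    _ ≤ sSup (sumTrans 2 ![ν₁, ν₂] K J ![x₁, x₂] '' Icc x₁ x₂) :=
        le_sSup ⟨t, ⟨by linarith, by linarith⟩, rfl⟩

theorem weighted_gap_lt_of_sumTrans_le_left (hν₁ : 0 < ν₁) (hν₂ : 0 < ν₂) (hK : KernelFun K)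
    (hSC : KStrictConcave K) (hSM : KStrictMonotone K) (hJ : ∀ t, J t ≠ ⊤)
    {a x₁ x₂ y₁ y₂ : ℝ} (ha : 0 ≤ a) (hax : a ≤ x₁) (h1 : x₁ < y₁) (h2 : y₁ < y₂)
    (h3 : y₂ < x₂) (h4 : x₂ ≤ 1) (hx : sumTrans 2 ![ν₁, ν₂] K J ![x₁, x₂] a ≠ ⊥)
    (hle : sumTrans 2 ![ν₁, ν₂] K J ![y₁, y₂] a ≤ sumTrans 2 ![ν₁, ν₂] K J ![x₁, x₂] a) :
    ν₁ * (y₁ - x₁) < ν₂ * (x₂ - y₂) := by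
  obtain ⟨hJa, hKx₁, hKx₂⟩ := sumTrans_two_ne_bot hν₁ hν₂ hx
  have hKy₁ : K (a - y₁) ≠ ⊥ := hK.2.1 _ (Or.inl ⟨by linarith, by linarith⟩)
  have hKy₂ : K (a - y₂) ≠ ⊥ := hK.2.1 _ (Or.inl ⟨by linarith, by linarith⟩)
  rw [sumTrans_two_eq_coe hJ hK.1 hJa hKy₁ hKy₂, sumTrans_two_eq_coe hJ hK.1 hJa hKx₁ hKx₂,
    EReal.coe_le_coe_iff] at hle
  have hslope := hK.toReal_sub_mul_lt hSC (Or.inl ⟨by linarith, by linarith⟩) hKx₂ hKx₁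
    (by linarith : a - x₂ < a - y₂) (by linarith : a - y₂ < a - y₁)
    (by linarith : a - y₁ < a - x₁)
  have hdec : (K (a - x₁)).toReal < (K (a - y₁)).toReal := EReal.toReal_lt_toReal
    (hK.strictAntiOn_Icc hSM ⟨by linarith, by linarith⟩ ⟨by linarith, by linarith⟩
      (by linarith)) hKx₁ (hK.1 _)
  -- with `A = K(a-y₁) - K(a-x₁) > 0` and `B = K(a-x₂) - K(a-y₂)`, `hle` reads `ν₁ A ≤ ν₂ B`
  -- and `hslope` reads `B (y₁ - x₁) < A (x₂ - y₂)`
  nlinarith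

theorem weighted_gap_lt_of_sumTrans_le_right (hν₁ : 0 < ν₁) (hν₂ : 0 < ν₂) (hK : KernelFun K)
    (hSC : KStrictConcave K) (hSM : KStrictMonotone K) (hJ : ∀ t, J t ≠ ⊤)
    {b x₁ x₂ y₁ y₂ : ℝ} (h0 : 0 ≤ x₁) (h1 : x₁ < y₁) (h2 : y₁ < y₂) (h3 : y₂ < x₂)
    (hxb : x₂ ≤ b) (hb : b ≤ 1) (hx : sumTrans 2 ![ν₁, ν₂] K J ![x₁, x₂] b ≠ ⊥)
    (hle : sumTrans 2 ![ν₁, ν₂] K J ![y₁, y₂] b ≤ sumTrans 2 ![ν₁, ν₂] K J ![x₁, x₂] b) :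
    ν₂ * (x₂ - y₂) < ν₁ * (y₁ - x₁) := by
  obtain ⟨hJb, hKx₁, hKx₂⟩ := sumTrans_two_ne_bot hν₁ hν₂ hx
  have hKy₁ : K (b - y₁) ≠ ⊥ := hK.2.1 _ (Or.inr ⟨by linarith, by linarith⟩)
  have hKy₂ : K (b - y₂) ≠ ⊥ := hK.2.1 _ (Or.inr ⟨by linarith, by linarith⟩)
  rw [sumTrans_two_eq_coe hJ hK.1 hJb hKy₁ hKy₂, sumTrans_two_eq_coe hJ hK.1 hJb hKx₁ hKx₂,
    EReal.coe_le_coe_iff] at hle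
  have hslope := hK.toReal_sub_mul_lt hSC (Or.inr ⟨by linarith, by linarith⟩) hKx₂ hKx₁
    (by linarith : b - x₂ < b - y₂) (by linarith : b - y₂ < b - y₁)
    (by linarith : b - y₁ < b - x₁)
  have hinc : (K (b - x₂)).toReal < (K (b - y₂)).toReal := EReal.toReal_lt_toReal
    (hK.strictMonoOn_Icc hSM ⟨by linarith, by linarith⟩ ⟨by linarith, by linarith⟩
      (by linarith)) hKx₂ (hK.1 _)
  -- with `C = K(b-x₁) - K(b-y₁)` and `D = K(b-y₂) - K(b-x₂) > 0`, `hle` reads `ν₂ D ≤ ν₁ C`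
  -- and `hslope` reads `C (x₂ - y₂) < D (y₁ - x₁)`
  nlinarith

theorem intMax_zero_lt_or_intMax_two_lt_of_nested (hν₁ : 0 < ν₁) (hν₂ : 0 < ν₂)
    (hK : KernelFun K) (hSC : KStrictConcave K) (hSM : KStrictMonotone K) (hJ : ∀ t, J t ≠ ⊤)
    (hJusc : UpperSemicontinuousOn J (Icc 0 1)) {x₁ x₂ y₁ y₂ : ℝ} (h0 : 0 ≤ x₁) (h1 : x₁ < y₁)
    (h2 : y₁ < y₂) (h3 : y₂ < x₂) (h4 : x₂ ≤ 1) (hx : regularNodes 2 ![ν₁, ν₂] K J ![x₁, x₂]) :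
    intMax 2 ![ν₁, ν₂] K J ![x₁, x₂] 0 < intMax 2 ![ν₁, ν₂] K J ![y₁, y₂] 0 ∨
      intMax 2 ![ν₁, ν₂] K J ![x₁, x₂] 2 < intMax 2 ![ν₁, ν₂] K J ![y₁, y₂] 2 := by
  have husc := upperSemicontinuousOn_sumTrans_two hν₁ hν₂ hK hJ hJusc
    (c₁ := x₁) (c₂ := x₂) ⟨h0, by linarith⟩ ⟨by linarith, h4⟩
  obtain ⟨a, ⟨ha₀, hax⟩, hmax_a⟩ :=
    (husc.mono (Icc_subset_Icc le_rfl (by linarith))).exists_sSup_image_eq isCompact_Icc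
      (nonempty_Icc.2 h0)
  obtain ⟨b, ⟨hxb, hb₁⟩, hmax_b⟩ :=
    (husc.mono (Icc_subset_Icc (by linarith) le_rfl)).exists_sSup_image_eq isCompact_Icc
      (nonempty_Icc.2 h4)
  have hfin_a := hx 0
  have hfin_b := hx 2
  rw [intMax_two_zero, hmax_a] at hfin_a
  rw [intMax_two_two, hmax_b] at hfin_b
  by_contra! h
  rw [intMax_two_zero, intMax_two_zero, hmax_a, intMax_two_two, intMax_two_two, hmax_b] at h
  have hle_a := h.1.trans' (le_sSup ⟨a, ⟨ha₀, hax.trans h1.le⟩, rfl⟩)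
  have hle_b := h.2.trans' (le_sSup ⟨b, ⟨h3.le.trans hxb, hb₁⟩, rfl⟩)
  exact (weighted_gap_lt_of_sumTrans_le_left hν₁ hν₂ hK hSC hSM hJ ha₀ hax h1 h2 h3 h4 hfin_a
    hle_a).not_gt (weighted_gap_lt_of_sumTrans_le_right hν₁ hν₂ hK hSC hSM hJ h0 h1 h2 h3 hxb hb₁
      hfin_b hle_b)

end TwoNodes

/-- The `n = 2` case with `x₁ < y₁ < y₂ < x₂`: then `m₁(y) < m₁(x)`, and moreover
`m₀(x) < m₀(y)` or `m₂(x) < m₂(y)`; in particular intertwining of maxima holds. -/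
theorem two_nodes_intertwining (ν₁ ν₂ : ℝ) (hν₁ : 0 < ν₁) (hν₂ : 0 < ν₂)
    (K J : ℝ → EReal) (hK : KernelFun K) (hSC : KStrictConcave K) (hSM : KStrictMonotone K)
    (hJ : NFieldFun 2 J) (hJusc : UpperSemicontinuousOn J (Icc (0:ℝ) 1))
    (x₁ x₂ y₁ y₂ : ℝ) (h0 : 0 ≤ x₁) (h1 : x₁ < y₁) (h2 : y₁ < y₂) (h3 : y₂ < x₂)
    (h4 : x₂ ≤ 1)
    (hxr : regularNodes 2 ![ν₁, ν₂] K J ![x₁, x₂])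
    (hyr : regularNodes 2 ![ν₁, ν₂] K J ![y₁, y₂]) :
    intMax 2 ![ν₁, ν₂] K J ![y₁, y₂] 1 < intMax 2 ![ν₁, ν₂] K J ![x₁, x₂] 1 ∧
      (intMax 2 ![ν₁, ν₂] K J ![x₁, x₂] 0 < intMax 2 ![ν₁, ν₂] K J ![y₁, y₂] 0 ∨
        intMax 2 ![ν₁, ν₂] K J ![x₁, x₂] 2 < intMax 2 ![ν₁, ν₂] K J ![y₁, y₂] 2) :=
  ⟨intMax_one_lt_of_nested hν₁ hν₂ hK hSM hJ.1 hJusc h0 h1 h2 h3 h4 (hyr 1),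
    intMax_zero_lt_or_intMax_two_lt_of_nested hν₁ hν₂ hK hSC hSM hJ.1 hJusc h0 h1 h2 h3 h4 hxr⟩
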